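/- arXiv:1510.02145 — 4 statements merged into one kernel-verified Lean document; each statement's English description precedes it below -/
import Mathlib

section
/- Let F : ℝⁿ × ℝᵐ → ℝ be continuously differentiable and globally strictly convex-concave, and assume its set Saddle(F) of saddle points is nonempty. Then Saddle(F) is globally asymptotically stable under the saddle-point dynamics ẋ = -∇ₓF(x,z), ż = ∇_zF(x,z): every saddle point is stable and every trajectory converges asymptotically to a single point of Saddle(F). -/
open Metric Filter Topology Set

noncomputable section

/-- Euclidean space `ℝⁿ`. -/
abbrev En (n : ℕ) : Type := EuclideanSpace ℝ (Fin n)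

variable {n m : ℕ}

/-- Partial gradient of `F` in the first (x) variable. -/
def gradX (F : En n × En m → ℝ) (p : En n × En m) : En n :=
  gradient (fun x => F (x, p.2)) p.1

/-- Partial gradient of `F` in the second (z) variable. -/
def gradZ (F : En n × En m → ℝ) (p : En n × En m) : En m :=
  gradient (fun z => F (p.1, z)) p.2

/-- The saddle-point vector field `X_sp = (-∇ₓF, ∇_zF)`. -/
def Xsp (F : En n × En m → ℝ) (p : En n × En m) : En n × En m :=
  (-gradX F p, gradZ F p)

/-- A trajectory of the saddle-point dynamics, defined on `[0,∞)`. -/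
def IsTrajectory (F : En n × En m → ℝ) (φ : ℝ → En n × En m) : Prop :=
  ∀ t : ℝ, 0 ≤ t → HasDerivAt φ (Xsp F (φ t)) t

/-- `p` is a (local min-max) saddle point of `F`. -/
def IsSaddlePoint (F : En n × En m → ℝ) (p : En n × En m) : Prop :=
  ∃ U : Set (En n), ∃ W : Set (En m),
    IsOpen U ∧ IsOpen W ∧ p.1 ∈ U ∧ p.2 ∈ W ∧
    ∀ x ∈ U, ∀ z ∈ W, F (p.1, z) ≤ F p ∧ F p ≤ F (x, p.2)

/-- The set of saddle points of `F`. -/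
def SaddleSet (F : En n × En m → ℝ) : Set (En n × En m) :=
  {p | IsSaddlePoint F p}

/-- A point `p` is stable for the saddle-point dynamics of `F`. -/
def StablePt (F : En n × En m → ℝ) (p : En n × En m) : Prop :=
  ∀ ε > 0, ∃ δ > 0, ∀ φ : ℝ → En n × En m, IsTrajectory F φ →
    dist (φ 0) p < δ → ∀ t : ℝ, 0 ≤ t → dist (φ t) p < ε

/-- `S` is an isolated path connected component of `T`. -/
def IsIsolatedPathComponent (S T : Set (En n × En m)) : Prop :=
  S ⊆ T ∧ (∀ a ∈ S, ∀ b ∈ S, JoinedIn S a b) ∧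
    ∃ U : Set (En n × En m), IsOpen U ∧ S ⊆ U ∧ U ∩ T = S

/-- `F` is locally convex-concave at `p`. -/
def LocallyConvexConcaveAt (F : En n × En m → ℝ) (p : En n × En m) : Prop :=
  ∃ U : Set (En n × En m), IsOpen U ∧ p ∈ U ∧
    ∀ q ∈ U, ConvexOn ℝ {x : En n | (x, q.2) ∈ U} (fun x => F (x, q.2)) ∧
      ConcaveOn ℝ {z : En m | (q.1, z) ∈ U} (fun z => F (q.1, z))

/-- `F` is locally strictly convex-concave at `p`. -/
def LocallyStrictlyConvexConcaveAt (F : En n × En m → ℝ) (p : En n × En m) : Prop :=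
  LocallyConvexConcaveAt F p ∧
    ((∃ r > 0, StrictConvexOn ℝ (ball p.1 r) (fun x => F (x, p.2))) ∨
      (∃ r > 0, StrictConcaveOn ℝ (ball p.2 r) (fun z => F (p.1, z))))

/-! Under convexity-concavity, local saddle points are global ones. For a saddle point
`p = (x*, z*)`, the gradient inequalities in both variables bound the derivative of the squared
Euclidean distance to `p` along a trajectory by `-2` times the saddle gap
`F (x, z*) - F (x*, z) ≥ 0`; so that distance is nonincreasing, which gives stability and keeps
every trajectory in a compact ball, where it is uniformly continuous. Barbalat's lemma then makes
the gap tend to `0`. If `F (·, z*)` is strictly convex this forces `x(t) → x*`, and Barbalat's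
lemma applied to `x` gives `∇ₓF → 0` along the trajectory. Hence a cluster point `q` of the
trajectory has `q.1 = x*`, maximizes `F (x*, ·)` and satisfies `∇ₓF q = 0`, so it is a saddle
point; since the distance to `q` is nonincreasing, the trajectory converges to `q`. The strictly
concave case follows by exchanging the players, `(x, z) ↦ -F (z, x)`. -/

open scoped RealInnerProductSpace

theorem MapClusterPt.eq_of_tendsto {X ι : Type*} [TopologicalSpace X] [T2Space X]
    {l : Filter ι} {u : ι → X} {x y : X} (hy : MapClusterPt y l u) (hx : Tendsto u l (𝓝 x)) :
    y = x :=
  eq_of_nhds_neBot (hy.clusterPt.mono hx)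

theorem ConvexOn.add_inner_sub_le_of_hasGradientAt {E : Type*} [NormedAddCommGroup E]
    [InnerProductSpace ℝ E] [CompleteSpace E] {f : E → ℝ} {g x : E}
    (hf : ConvexOn ℝ univ f) (hg : HasGradientAt f g x) (y : E) :
    f x + ⟪g, y - x⟫ ≤ f y := by
  let ℓ : ℝ →ᵃ[ℝ] E := AffineMap.lineMap x y
  have hℓ : HasDerivAt (f ∘ ℓ) ⟪g, y - x⟫ 0 := by
    have hline : HasDerivAt ℓ (y - x) 0 := AffineMap.hasDerivAt_lineMap
    have hx : HasFDerivAt f (InnerProductSpace.toDual ℝ E g) (ℓ 0) := by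
      simpa [ℓ] using hg.hasFDerivAt
    simpa using hx.comp_hasDerivAt (0 : ℝ) hline
  have := (hf.comp_affineMap ℓ).le_slope_of_hasDerivAt (mem_univ 0) (mem_univ 1) one_pos hℓ
  simp only [slope_def_field, Function.comp_apply, AffineMap.lineMap_apply_one,
    AffineMap.lineMap_apply_zero, sub_zero, div_one, ℓ] at this
  linarith

theorem ConcaveOn.le_add_inner_sub_of_hasGradientAt {E : Type*} [NormedAddCommGroup E]
    [InnerProductSpace ℝ E] [CompleteSpace E] {f : E → ℝ} {g x : E}
    (hf : ConcaveOn ℝ univ f) (hg : HasGradientAt f g x) (y : E) :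
    f y ≤ f x + ⟪g, y - x⟫ := by
  have hneg : HasGradientAt (-f) (-g) x := by
    simpa [hasGradientAt_iff_hasFDerivAt] using hg.hasFDerivAt.neg
  have := hf.neg.add_inner_sub_le_of_hasGradientAt hneg y
  simp only [Pi.neg_apply, inner_neg_left] at this
  linarith

theorem StrictConvexOn.tendsto_of_tendsto_isMinOn {E ι : Type*} [AddCommGroup E] [Module ℝ E]
    [TopologicalSpace E] {f : E → ℝ} (hf : StrictConvexOn ℝ univ f) (hfc : Continuous f)
    {x₀ : E} (hmin : IsMinOn f univ x₀) {K : Set E} (hK : IsCompact K) {l : Filter ι}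
    {u : ι → E} (hu : ∀ᶠ i in l, u i ∈ K) (hlim : Tendsto (f ∘ u) l (𝓝 (f x₀))) :
    Tendsto u l (𝓝 x₀) := by
  refine hK.tendsto_nhds_of_unique_mapClusterPt hu fun y _ hy => ?_
  have hfy : f y = f x₀ := (hy.continuousAt_comp hfc.continuousAt).eq_of_tendsto hlim
  exact hf.eq_of_isMinOn (fun x _ => hfy ▸ hmin (mem_univ x)) hmin (mem_univ y) (mem_univ x₀)

theorem exists_tendsto_of_antitoneOn_Ici {W : ℝ → ℝ} {a b : ℝ} (hW : AntitoneOn W (Ici a))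
    (hb : ∀ t ≥ a, b ≤ W t) : ∃ c, Tendsto W atTop (𝓝 c) := by
  have hV : Antitone fun t => W (max t a) := fun s t hst =>
    hW (le_max_right s a) (le_max_right t a) (max_le_max_right a hst)
  refine ⟨_, (tendsto_atTop_ciInf hV ⟨b, ?_⟩).congr' ?_⟩
  · rintro _ ⟨t, rfl⟩
    exact hb _ (le_max_right t a)
  · filter_upwards [eventually_ge_atTop a] with t ht
    rw [max_eq_left ht]

/-- Barbalat's lemma: if `f'` stayed away from `0` infinitely often, uniform continuity would
make `f` move by a fixed amount over intervals of a fixed length, contradicting convergence. -/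
theorem tendsto_deriv_zero_of_uniformContinuousOn {E : Type*} [NormedAddCommGroup E]
    [NormedSpace ℝ E] {f f' : ℝ → E} {a : E} (hf : ∀ t ≥ 0, HasDerivAt f (f' t) t)
    (hlim : Tendsto f atTop (𝓝 a)) (huc : UniformContinuousOn f' (Ici 0)) :
    Tendsto f' atTop (𝓝 0) := by
  rw [Metric.tendsto_atTop]
  intro ε hε
  obtain ⟨δ, hδ, hf'⟩ := Metric.uniformContinuousOn_iff.1 huc (ε / 2) (half_pos hε)
  set h := δ / 2
  have hh : 0 < h := half_pos hδ
  have hhδ : h < δ := half_lt_self hδ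
  have hincr : Tendsto (fun t => f (t + h) - f t) atTop (𝓝 0) := by
    simpa using (hlim.comp (tendsto_atTop_add_const_right _ h tendsto_id)).sub hlim
  obtain ⟨T, hT⟩ := Metric.tendsto_atTop.1 hincr (h * (ε / 2)) (by positivity)
  refine ⟨max T 0, fun t ht => ?_⟩
  have ht0 : 0 ≤ t := le_of_max_le_right ht
  have hstep : ‖f (t + h) - f t‖ < h * (ε / 2) := by
    simpa using hT t (le_of_max_le_left ht)
  -- mean value inequality for `s ↦ f s - s • f' t`, whose derivative stays `ε / 2`-small
  have hmvt : ‖(f (t + h) - f t) - h • f' t‖ ≤ ε / 2 * h := by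
    have := norm_image_sub_le_of_norm_deriv_le_segment' (f := fun s => f s - s • f' t)
      (f' := fun s => f' s - f' t) (a := t) (b := t + h)
      (C := ε / 2) (fun s hs => ?_) (fun s hs => ?_) (t + h)
      ⟨by linarith, le_rfl⟩
    · convert this using 2 <;> module
    · have := (hf s (ht0.trans hs.1)).fun_sub ((hasDerivAt_id' s).smul_const (f' t))
      rw [one_smul] at this
      exact this.hasDerivWithinAt
    · rw [← dist_eq_norm]
      refine (hf' s (ht0.trans hs.1) t ht0 ?_).le
      rw [Real.dist_eq, abs_of_nonneg (by linarith [hs.1])]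
      linarith [hs.2]
  have hbound : h * ‖f' t‖ < h * ε :=
    calc h * ‖f' t‖ = ‖h • f' t‖ := by rw [norm_smul, Real.norm_of_nonneg hh.le]
      _ ≤ ‖f (t + h) - f t‖ + ‖(f (t + h) - f t) - h • f' t‖ := norm_le_norm_add_norm_sub _ _
      _ < h * (ε / 2) + ε / 2 * h := add_lt_add_of_lt_of_le hstep hmvt
      _ = h * ε := by ring
  rw [dist_zero_right]
  exact lt_of_mul_lt_mul_left hbound hh.le

theorem uniformContinuousOn_Ici_of_hasDerivAt {E : Type*} [NormedAddCommGroup E]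
    [NormedSpace ℝ E] {V : E → E} {K : Set E} {γ : ℝ → E} (hV : ContinuousOn V K)
    (hK : IsCompact K) (hγ : ∀ t ≥ 0, HasDerivAt γ (V (γ t)) t) (hγK : MapsTo γ (Ici 0) K) :
    UniformContinuousOn γ (Ici 0) := by
  obtain ⟨C, hC⟩ := hK.exists_bound_of_continuousOn hV
  refine (LipschitzOnWith.uniformContinuousOn (K := C.toNNReal) ?_)
  refine (convex_Ici 0).lipschitzOnWith_of_nnnorm_hasDerivWithin_le
    (fun t ht => (hγ t ht).hasDerivWithinAt) fun t ht => ?_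
  rw [← NNReal.coe_le_coe, coe_nnnorm]
  exact (hC _ (hγK ht)).trans (Real.le_coe_toNNReal C)

theorem tendsto_of_mapClusterPt_of_dist_le {X : Type*} [PseudoMetricSpace X] {γ : ℝ → X}
    {q : X} {C : ℝ} (hq : MapClusterPt q atTop γ)
    (hγ : ∀ s t, 0 ≤ s → s ≤ t → dist (γ t) q ≤ C * dist (γ s) q) :
    Tendsto γ atTop (𝓝 q) := by
  rw [Metric.tendsto_atTop]
  intro ε hε
  have hC : 0 < |C| + 1 := by positivity
  obtain ⟨s, hs0, hs⟩ := frequently_atTop.1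
    (hq.frequently (Metric.ball_mem_nhds q (div_pos hε hC))) 0
  refine ⟨s, fun t hst => ?_⟩
  calc dist (γ t) q ≤ C * dist (γ s) q := hγ s t hs0 hst
    _ ≤ (|C| + 1) * dist (γ s) q :=
        mul_le_mul_of_nonneg_right (by linarith [le_abs_self C]) dist_nonneg
    _ < (|C| + 1) * (ε / (|C| + 1)) := mul_lt_mul_of_pos_left (mem_ball.1 hs) hC
    _ = ε := mul_div_cancel₀ ε hC.ne'


section SaddleDynamics

variable {n m : ℕ} {F : En n × En m → ℝ} {φ : ℝ → En n × En m} {p q : En n × En m}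

def IsConvexConcave (F : En n × En m → ℝ) : Prop :=
  ∀ q : En n × En m,
    ConvexOn ℝ univ (fun x => F (x, q.2)) ∧ ConcaveOn ℝ univ (fun z => F (q.1, z))

def IsGlobalSaddle (F : En n × En m → ℝ) (p : En n × En m) : Prop :=
  IsMinOn (fun x => F (x, p.2)) univ p.1 ∧ IsMaxOn (fun z => F (p.1, z)) univ p.2

theorem IsGlobalSaddle.isSaddlePoint (hp : IsGlobalSaddle F p) : IsSaddlePoint F p :=
  ⟨univ, univ, isOpen_univ, isOpen_univ, mem_univ _, mem_univ _,
    fun x _ z _ => ⟨hp.2 (mem_univ z), hp.1 (mem_univ x)⟩⟩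

theorem IsSaddlePoint.isGlobalSaddle (hcc : IsConvexConcave F) (hp : IsSaddlePoint F p) :
    IsGlobalSaddle F p := by
  obtain ⟨U, W, hU, hW, hpU, hpW, hUW⟩ := hp
  refine ⟨.of_isLocalMinOn_of_convexOn (mem_univ _) ?_ (hcc p).1,
    .of_isLocalMaxOn_of_concaveOn (mem_univ _) ?_ (hcc p).2⟩
  · rw [IsLocalMinOn, nhdsWithin_univ]
    filter_upwards [hU.mem_nhds hpU] with x hx using (hUW x hx p.2 hpW).2
  · rw [IsLocalMaxOn, nhdsWithin_univ]
    filter_upwards [hW.mem_nhds hpW] with z hz using (hUW p.1 hpU z hz).1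

theorem hasGradientAt_gradX (hF : Differentiable ℝ F) (p : En n × En m) :
    HasGradientAt (fun x => F (x, p.2)) (gradX F p) p.1 :=
  (hF.comp (differentiable_id.prodMk (differentiable_const p.2)) p.1).hasGradientAt

theorem hasGradientAt_gradZ (hF : Differentiable ℝ F) (p : En n × En m) :
    HasGradientAt (fun z => F (p.1, z)) (gradZ F p) p.2 :=
  (hF.comp ((differentiable_const p.1).prodMk differentiable_id) p.2).hasGradientAt

theorem continuous_gradX (hF : ContDiff ℝ 1 F) : Continuous (gradX F) := by
  have hgrad : gradX F = fun p => (InnerProductSpace.toDual ℝ (En n)).symm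
      ((fderiv ℝ F p).comp (ContinuousLinearMap.inl ℝ (En n) (En m))) := by
    funext p
    have hFp : HasFDerivAt F (fderiv ℝ F p) (p.1, p.2) :=
      ((hF.differentiable one_ne_zero) p).hasFDerivAt
    have hpartial : HasFDerivAt (fun x => F (x, p.2))
        ((fderiv ℝ F p).comp (ContinuousLinearMap.inl ℝ (En n) (En m))) p.1 :=
      hFp.comp p.1 (hasFDerivAt_prodMk_left p.1 p.2)
    rw [gradX, gradient, hpartial.fderiv]
  rw [hgrad]
  exact (InnerProductSpace.toDual ℝ (En n)).symm.continuous.comp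
    ((hF.continuous_fderiv one_ne_zero).clm_comp continuous_const)

theorem continuous_gradZ (hF : ContDiff ℝ 1 F) : Continuous (gradZ F) := by
  have hgrad : gradZ F = fun p => (InnerProductSpace.toDual ℝ (En m)).symm
      ((fderiv ℝ F p).comp (ContinuousLinearMap.inr ℝ (En n) (En m))) := by
    funext p
    have hFp : HasFDerivAt F (fderiv ℝ F p) (p.1, p.2) :=
      ((hF.differentiable one_ne_zero) p).hasFDerivAt
    have hpartial : HasFDerivAt (fun z => F (p.1, z))
        ((fderiv ℝ F p).comp (ContinuousLinearMap.inr ℝ (En n) (En m))) p.2 :=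
      hFp.comp p.2 (hasFDerivAt_prodMk_right p.1 p.2)
    rw [gradZ, gradient, hpartial.fderiv]
  rw [hgrad]
  exact (InnerProductSpace.toDual ℝ (En m)).symm.continuous.comp
    ((hF.continuous_fderiv one_ne_zero).clm_comp continuous_const)

theorem continuous_Xsp (hF : ContDiff ℝ 1 F) : Continuous (Xsp F) :=
  (continuous_gradX hF).neg.prodMk (continuous_gradZ hF)

theorem IsTrajectory.hasDerivAt_fst (hφ : IsTrajectory F φ) {t : ℝ} (ht : 0 ≤ t) :
    HasDerivAt (fun s => (φ s).1) (-gradX F (φ t)) t := by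
  simpa [Xsp, Function.comp_def] using
    ((ContinuousLinearMap.fst ℝ (En n) (En m)).hasFDerivAt (x := φ t)).comp_hasDerivAt t (hφ t ht)

theorem IsTrajectory.hasDerivAt_snd (hφ : IsTrajectory F φ) {t : ℝ} (ht : 0 ≤ t) :
    HasDerivAt (fun s => (φ s).2) (gradZ F (φ t)) t := by
  simpa [Xsp, Function.comp_def] using
    ((ContinuousLinearMap.snd ℝ (En n) (En m)).hasFDerivAt (x := φ t)).comp_hasDerivAt t (hφ t ht)

/-- The squared Euclidean distance from `p` to `q` (the product `En n × En m` itself carries the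
sup distance). -/
def sqDist (p q : En n × En m) : ℝ := ‖q.1 - p.1‖ ^ 2 + ‖q.2 - p.2‖ ^ 2

/-- The derivative of `sqDist p` along the saddle-point vector field at `q`. -/
def sqDistRate (F : En n × En m → ℝ) (p q : En n × En m) : ℝ :=
  2 * (⟪-gradX F q, q.1 - p.1⟫ + ⟪gradZ F q, q.2 - p.2⟫)

def saddleGap (F : En n × En m → ℝ) (p q : En n × En m) : ℝ := F (q.1, p.2) - F (p.1, q.2)

theorem sqDist_nonneg (p q : En n × En m) : 0 ≤ sqDist p q := by
  unfold sqDist; positivity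

theorem dist_sq_le_sqDist (p q : En n × En m) : dist q p ^ 2 ≤ sqDist p q := by
  rw [sqDist, Prod.dist_eq, dist_eq_norm, dist_eq_norm]
  rcases le_total ‖q.1 - p.1‖ ‖q.2 - p.2‖ with h | h
  · rw [max_eq_right h]; nlinarith [norm_nonneg (q.1 - p.1)]
  · rw [max_eq_left h]; nlinarith [norm_nonneg (q.2 - p.2)]

theorem sqDist_le_two_mul_dist_sq (p q : En n × En m) : sqDist p q ≤ 2 * dist q p ^ 2 := by
  have h1 : ‖q.1 - p.1‖ ≤ dist q p := by
    rw [← dist_eq_norm, Prod.dist_eq]; exact le_max_left _ _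
  have h2 : ‖q.2 - p.2‖ ≤ dist q p := by
    rw [← dist_eq_norm, Prod.dist_eq]; exact le_max_right _ _
  rw [sqDist]
  nlinarith [norm_nonneg (q.1 - p.1), norm_nonneg (q.2 - p.2)]

theorem continuous_sqDistRate (hF : ContDiff ℝ 1 F) (p : En n × En m) :
    Continuous (sqDistRate F p) := by
  have := continuous_gradX hF
  have := continuous_gradZ hF
  unfold sqDistRate
  fun_prop

theorem IsTrajectory.hasDerivAt_sqDist (hφ : IsTrajectory F φ) (p : En n × En m) {t : ℝ}
    (ht : 0 ≤ t) : HasDerivAt (fun s => sqDist p (φ s)) (sqDistRate F p (φ t)) t := by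
  have h1 := ((hφ.hasDerivAt_fst ht).sub_const p.1).norm_sq
  have h2 := ((hφ.hasDerivAt_snd ht).sub_const p.2).norm_sq
  refine (h1.add h2).congr_deriv ?_
  rw [sqDistRate, real_inner_comm _ ((φ t).1 - p.1), real_inner_comm _ ((φ t).2 - p.2)]
  ring

theorem sqDistRate_le (hF : Differentiable ℝ F) (hcc : IsConvexConcave F)
    (p q : En n × En m) : sqDistRate F p q ≤ -2 * saddleGap F p q := by
  have hx := (hcc q).1.add_inner_sub_le_of_hasGradientAt (hasGradientAt_gradX hF q) p.1
  have hz := (hcc q).2.le_add_inner_sub_of_hasGradientAt (hasGradientAt_gradZ hF q) p.2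
  rw [inner_sub_right] at hx hz
  rw [sqDistRate, saddleGap, inner_neg_left, inner_sub_right, inner_sub_right]
  linarith

theorem IsGlobalSaddle.saddleGap_nonneg (hp : IsGlobalSaddle F p) (q : En n × En m) :
    0 ≤ saddleGap F p q := by
  have h1 : F p ≤ F (q.1, p.2) := hp.1 (mem_univ q.1)
  have h2 : F (p.1, q.2) ≤ F p := hp.2 (mem_univ q.2)
  rw [saddleGap]
  linarith

theorem IsTrajectory.antitoneOn_sqDist (hF : Differentiable ℝ F) (hcc : IsConvexConcave F)
    (hφ : IsTrajectory F φ) (hp : IsGlobalSaddle F p) :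
    AntitoneOn (fun t => sqDist p (φ t)) (Ici 0) := by
  have hd := fun t (ht : t ∈ Ici (0 : ℝ)) => hφ.hasDerivAt_sqDist p ht
  refine antitoneOn_of_hasDerivWithinAt_nonpos (convex_Ici 0)
    (fun t ht => (hd t ht).continuousAt.continuousWithinAt)
    (fun t ht => (hd t (interior_subset ht)).hasDerivWithinAt) fun t _ => ?_
  linarith [sqDistRate_le hF hcc p (φ t), hp.saddleGap_nonneg (φ t)]

theorem IsTrajectory.dist_le (hF : Differentiable ℝ F) (hcc : IsConvexConcave F)
    (hφ : IsTrajectory F φ) (hp : IsGlobalSaddle F p) {s t : ℝ} (hs : 0 ≤ s) (hst : s ≤ t) :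
    dist (φ t) p ≤ √2 * dist (φ s) p := by
  have hmono := hφ.antitoneOn_sqDist hF hcc hp hs (hs.trans hst) hst
  rw [← Real.sqrt_sq dist_nonneg, ← Real.sqrt_sq (dist_nonneg (x := φ s)),
    ← Real.sqrt_mul zero_le_two]
  exact Real.sqrt_le_sqrt ((dist_sq_le_sqDist p (φ t)).trans
    (hmono.trans (sqDist_le_two_mul_dist_sq p (φ s))))

theorem IsGlobalSaddle.stablePt (hF : Differentiable ℝ F) (hcc : IsConvexConcave F)
    (hp : IsGlobalSaddle F p) : StablePt F p := by
  intro ε hε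
  refine ⟨ε / 2, half_pos hε, fun φ hφ h0 t ht => ?_⟩
  have hsqrt : √2 < 2 := by rw [Real.sqrt_lt' two_pos]; norm_num
  calc dist (φ t) p ≤ √2 * dist (φ 0) p := hφ.dist_le hF hcc hp le_rfl ht
    _ ≤ 2 * dist (φ 0) p := by gcongr
    _ < ε := by linarith

end SaddleDynamics

section Convergence

variable {n m : ℕ} {F : En n × En m → ℝ} {φ : ℝ → En n × En m} {p : En n × En m}

theorem IsTrajectory.mapsTo_closedBall (hF : Differentiable ℝ F) (hcc : IsConvexConcave F)
    (hφ : IsTrajectory F φ) (hp : IsGlobalSaddle F p) :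
    MapsTo φ (Ici 0) (closedBall p (√2 * dist (φ 0) p)) :=
  fun _ ht => mem_closedBall.2 (hφ.dist_le hF hcc hp le_rfl ht)

theorem IsTrajectory.uniformContinuousOn_comp {E : Type*} [UniformSpace E] (hF : ContDiff ℝ 1 F)
    (hcc : IsConvexConcave F) (hφ : IsTrajectory F φ) (hp : IsGlobalSaddle F p)
    {G : En n × En m → E} (hG : Continuous G) : UniformContinuousOn (G ∘ φ) (Ici 0) := by
  have hK := isCompact_closedBall p (√2 * dist (φ 0) p)
  have hφK := hφ.mapsTo_closedBall (hF.differentiable one_ne_zero) hcc hp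
  exact (hK.uniformContinuousOn_of_continuous hG.continuousOn).comp
    (uniformContinuousOn_Ici_of_hasDerivAt (continuous_Xsp hF).continuousOn hK hφ hφK) hφK

/-- Barbalat's lemma applied to `sqDist p ∘ φ` makes the saddle gap tend to `0`, and both of its
halves are nonnegative. -/
theorem IsTrajectory.tendsto_saddle_values (hF : ContDiff ℝ 1 F) (hcc : IsConvexConcave F)
    (hφ : IsTrajectory F φ) (hp : IsGlobalSaddle F p) :
    Tendsto (fun t => F ((φ t).1, p.2)) atTop (𝓝 (F p)) ∧
      Tendsto (fun t => F (p.1, (φ t).2)) atTop (𝓝 (F p)) := by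
  have hd := hF.differentiable one_ne_zero
  obtain ⟨c, hc⟩ := exists_tendsto_of_antitoneOn_Ici (hφ.antitoneOn_sqDist hd hcc hp)
    fun t _ => sqDist_nonneg p (φ t)
  have hrate : Tendsto (fun t => sqDistRate F p (φ t)) atTop (𝓝 0) :=
    tendsto_deriv_zero_of_uniformContinuousOn (fun t ht => hφ.hasDerivAt_sqDist p ht) hc
      (hφ.uniformContinuousOn_comp hF hcc hp (continuous_sqDistRate hF p))
  have hupper : Tendsto (fun t => F p - sqDistRate F p (φ t) / 2) atTop (𝓝 (F p)) := by
    simpa using tendsto_const_nhds.sub (hrate.div_const 2)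
  have hlower : Tendsto (fun t => F p + sqDistRate F p (φ t) / 2) atTop (𝓝 (F p)) := by
    simpa using tendsto_const_nhds.add (hrate.div_const 2)
  have hgap := fun t => sqDistRate_le hd hcc p (φ t)
  have hx : ∀ t, F p ≤ F ((φ t).1, p.2) := fun t => hp.1 (mem_univ _)
  have hz : ∀ t, F (p.1, (φ t).2) ≤ F p := fun t => hp.2 (mem_univ _)
  simp only [saddleGap] at hgap
  refine ⟨tendsto_of_tendsto_of_tendsto_of_le_of_le tendsto_const_nhds hupper hx fun t => ?_,
    tendsto_of_tendsto_of_tendsto_of_le_of_le hlower tendsto_const_nhds (fun t => ?_) hz⟩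
  · linarith [hgap t, hz t]
  · linarith [hgap t, hx t]

theorem IsTrajectory.exists_tendsto_isGlobalSaddle_of_strictConvexOn (hF : ContDiff ℝ 1 F)
    (hcc : IsConvexConcave F) (hφ : IsTrajectory F φ) (hp : IsGlobalSaddle F p)
    (hstrict : StrictConvexOn ℝ univ (fun x => F (x, p.2))) :
    ∃ q, IsGlobalSaddle F q ∧ Tendsto φ atTop (𝓝 q) := by
  have hd := hF.differentiable one_ne_zero
  have hK := isCompact_closedBall p (√2 * dist (φ 0) p)
  have hφK : ∀ᶠ t in atTop, φ t ∈ closedBall p (√2 * dist (φ 0) p) :=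
    (eventually_ge_atTop 0).mono fun _ ht => hφ.mapsTo_closedBall hd hcc hp ht
  obtain ⟨hxval, hzval⟩ := hφ.tendsto_saddle_values hF hcc hp
  have hx : Tendsto (fun t => (φ t).1) atTop (𝓝 p.1) :=
    hstrict.tendsto_of_tendsto_isMinOn
      (hF.continuous.comp (continuous_id.prodMk continuous_const)) hp.1 (hK.image continuous_fst)
      (hφK.mono fun _ ht => mem_image_of_mem _ ht) hxval
  have hgradX : Tendsto (fun t => gradX F (φ t)) atTop (𝓝 0) := by
    simpa using (tendsto_deriv_zero_of_uniformContinuousOn (fun t ht => hφ.hasDerivAt_fst ht) hx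
      (hφ.uniformContinuousOn_comp hF hcc hp (continuous_gradX hF).neg)).neg
  obtain ⟨q, -, hq⟩ := hK.exists_mapClusterPt (tendsto_principal.2 hφK)
  have hq1 : q.1 = p.1 := (hq.continuousAt_comp continuous_fst.continuousAt).eq_of_tendsto hx
  have hq2 : F (p.1, q.2) = F p :=
    (hq.continuousAt_comp (hF.continuous.comp
      (continuous_const.prodMk continuous_snd)).continuousAt).eq_of_tendsto hzval
  have hgq : gradX F q = 0 :=
    (hq.continuousAt_comp (continuous_gradX hF).continuousAt).eq_of_tendsto hgradX
  have hqs : IsGlobalSaddle F q := by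
    refine ⟨fun x _ => ?_, fun z _ => ?_⟩
    · simpa [hgq] using (hcc q).1.add_inner_sub_le_of_hasGradientAt (hasGradientAt_gradX hd q) x
    · change F (q.1, z) ≤ F (q.1, q.2)
      rw [hq1, hq2]
      exact hp.2 (mem_univ z)
  exact ⟨q, hqs,
    tendsto_of_mapClusterPt_of_dist_le hq fun s t hs hst => hφ.dist_le hd hcc hqs hs hst⟩

end Convergence

section NegSwap

variable {n m : ℕ} {F : En n × En m → ℝ} {φ : ℝ → En n × En m} {p : En n × En m}

/-- Exchanging the roles of the two players turns the strictly concave case into the strictly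
convex one. -/
def negSwap (F : En n × En m → ℝ) : En m × En n → ℝ := fun r => -F r.swap

theorem negSwap_negSwap (F : En n × En m → ℝ) : negSwap (negSwap F) = F := by
  funext r
  simp [negSwap]

theorem ContDiff.negSwap (hF : ContDiff ℝ 1 F) : ContDiff ℝ 1 (negSwap F) :=
  (hF.comp (contDiff_snd.prodMk contDiff_fst)).neg

theorem IsConvexConcave.negSwap (hcc : IsConvexConcave F) : IsConvexConcave (negSwap F) :=
  fun r => ⟨(hcc r.swap).2.neg, (hcc r.swap).1.neg⟩

theorem IsGlobalSaddle.negSwap (hp : IsGlobalSaddle F p) : IsGlobalSaddle (negSwap F) p.swap :=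
  ⟨hp.2.neg, hp.1.neg⟩

theorem Xsp_negSwap (r : En m × En n) : Xsp (negSwap F) r = (Xsp F r.swap).swap := by
  simp [Xsp, gradX, gradZ, negSwap, gradient, fderiv_fun_neg]

theorem IsTrajectory.negSwap (hφ : IsTrajectory F φ) :
    IsTrajectory (negSwap F) (Prod.swap ∘ φ) := fun t ht => by
  rw [Function.comp_apply, Xsp_negSwap, Prod.swap_swap]
  exact (ContinuousLinearEquiv.prodComm ℝ (En n) (En m)).hasFDerivAt.comp_hasDerivAt t (hφ t ht)

theorem IsTrajectory.exists_tendsto_isGlobalSaddle_of_strictConcaveOn (hF : ContDiff ℝ 1 F)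
    (hcc : IsConvexConcave F) (hφ : IsTrajectory F φ) (hp : IsGlobalSaddle F p)
    (hstrict : StrictConcaveOn ℝ univ (fun z => F (p.1, z))) :
    ∃ q, IsGlobalSaddle F q ∧ Tendsto φ atTop (𝓝 q) := by
  obtain ⟨q, hq, hlim⟩ := hφ.negSwap.exists_tendsto_isGlobalSaddle_of_strictConvexOn hF.negSwap
    hcc.negSwap hp.negSwap hstrict.neg
  refine ⟨q.swap, negSwap_negSwap F ▸ hq.negSwap, ?_⟩
  simpa [Function.comp_def] using (continuous_swap.tendsto q).comp hlim

end NegSwap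

/-- Corollary: global asymptotic stability of the set of saddle points via
convexity-concavity. If `F` is `C¹` and globally strictly convex-concave with nonempty saddle
set, then the saddle set is globally asymptotically stable: every saddle point is stable and
every trajectory converges to a single saddle point. -/
theorem stmt_1 {n m : ℕ} (F : En n × En m → ℝ) (hF : ContDiff ℝ 1 F)
    (hne : (SaddleSet F).Nonempty)
    (hcc : ∀ q : En n × En m,
      ConvexOn ℝ univ (fun x => F (x, q.2)) ∧ ConcaveOn ℝ univ (fun z => F (q.1, z)))
    (hstrict : ∀ q : En n × En m,
      StrictConvexOn ℝ univ (fun x => F (x, q.2)) ∨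
        StrictConcaveOn ℝ univ (fun z => F (q.1, z))) :
    (∀ p ∈ SaddleSet F, StablePt F p) ∧
    (∀ φ : ℝ → En n × En m, IsTrajectory F φ →
      ∃ q ∈ SaddleSet F, Tendsto φ atTop (𝓝 q)) := by
  refine ⟨fun p hp => (hp.isGlobalSaddle hcc).stablePt (hF.differentiable one_ne_zero) hcc,
    fun φ hφ => ?_⟩
  obtain ⟨p, hp⟩ := hne
  have hp' := IsSaddlePoint.isGlobalSaddle hcc hp
  obtain ⟨q, hq, hlim⟩ := (hstrict p).elim
    (hφ.exists_tendsto_isGlobalSaddle_of_strictConvexOn hF hcc hp')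
    (hφ.exists_tendsto_isGlobalSaddle_of_strictConcaveOn hF hcc hp')
  exact ⟨q, hq.isSaddlePoint, hlim⟩
end
end

section
/- Let F : ℝⁿ × ℝᵐ → ℝ be twice continuously differentiable with nonempty saddle set Saddle(F), such that the mixed second-derivative map (x,z) ↦ ∇ₓ_z F(x,z) is locally Lipschitz, and assume F is locally jointly strongly quasiconvex-quasiconcave at every point of Saddle(F). Then every isolated path connected component of Saddle(F) is locally asymptotically stable under the saddle-point dynamics ẋ = -∇ₓF(x,z), ż = ∇_zF(x,z), and every trajectory starting sufficiently close converges to a single point of that component. -/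
/-!
Strong quasiconvexity turns a local minimiser of a slice into its unique minimiser, so comparing
`F` at the four corners of the rectangle spanned by two nearby saddle points forces them to
coincide: saddle points are isolated, and a path connected set of them is a single point `p`.
Near `p`, strong quasiconvexity gives `⟪∇ₓF (x, p₂), x - p₁⟫ ≥ s ‖x - p₁‖²` and
`-⟪∇_zF (p₁, z), z - p₂⟫ ≥ s ‖z - p₂‖²`; by the mean value theorem along the sides of the rectangle
spanned by `p` and `(x, z)` and the symmetry of the Hessian, passing to `⟪∇ₓF (x, z), x - p₁⟫ -
⟪∇_zF (x, z), z - p₂⟫` costs only a cubic error controlled by the Lipschitz constant of `∇ₓ_z F`.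
Hence `V = ‖x - p₁‖² + ‖z - p₂‖²` satisfies `V' ≤ -c V` along trajectories near `p`, and every
trajectory starting close to `p` converges to `p` exponentially fast.
-/

open Metric Filter Topology Set

noncomputable section

variable {n m : ℕ}

/-- A function `f` is strongly quasiconvex with parameter `s > 0` on a convex set `D`. -/
def StronglyQuasiconvexOn {X : Type*} [NormedAddCommGroup X] [NormedSpace ℝ X]
    (s : ℝ) (D : Set X) (f : X → ℝ) : Prop :=
  Convex ℝ D ∧ ∀ x ∈ D, ∀ y ∈ D, ∀ lam ∈ Icc (0 : ℝ) 1,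
    s * lam * (1 - lam) * ‖x - y‖ ^ 2 ≤ max (f x) (f y) - f (lam • x + (1 - lam) • y)

/-- `F` is locally jointly strongly quasiconvex-quasiconcave at `p`. -/
def LocallyJointlyStronglyQcQcAt (F : En n × En m → ℝ) (p : En n × En m) : Prop :=
  ∃ s > (0 : ℝ), ∃ U : Set (En n × En m), IsOpen U ∧ p ∈ U ∧
    ∀ q ∈ U, StronglyQuasiconvexOn s {x : En n | (x, q.2) ∈ U} (fun x => F (x, q.2)) ∧
      StronglyQuasiconvexOn s {z : En m | (q.1, z) ∈ U} (fun z => -F (q.1, z))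

/-- The mixed second derivative map `(x,z) ↦ ∇ₓ_z F (x,z)`. -/
def mixedXZ (F : En n × En m → ℝ) (p : En n × En m) : En m →L[ℝ] En n :=
  fderiv ℝ (fun z => gradX F (p.1, z)) p.2

namespace StronglyQuasiconvexOn

variable {E : Type*} [NormedAddCommGroup E] [NormedSpace ℝ E] {s : ℝ} {D : Set E} {f : E → ℝ}
  {x y : E}

lemma apply_add_smul_sub_le (hf : StronglyQuasiconvexOn s D f) (hx : x ∈ D) (hy : y ∈ D)
    (hyx : f y ≤ f x) {t : ℝ} (ht : t ∈ Icc (0 : ℝ) 1) :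
    f (x + t • (y - x)) ≤ f x - s * t * (1 - t) * ‖x - y‖ ^ 2 := by
  have h := hf.2 x hx y hy (1 - t) ⟨by linarith [ht.2], by linarith [ht.1]⟩
  rw [max_eq_left hyx, show (1 - t) • x + (1 - (1 - t)) • y = x + t • (y - x) by module] at h
  linarith

lemma mul_norm_sub_sq_le (hf : StronglyQuasiconvexOn s D f) (hx : x ∈ D) (hy : y ∈ D)
    (hyx : f y ≤ f x) {f' : E →L[ℝ] ℝ} (hf' : HasFDerivAt f f' x) :
    s * ‖x - y‖ ^ 2 ≤ f' (x - y) := by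
  -- `t ↦ f (x + t • (y - x)) + s t (1 - t) ‖x - y‖²` is maximal on `[0, 1]` at `t = 0`.
  set ψ : ℝ → ℝ := fun t => f (x + t • (y - x)) + s * t * (1 - t) * ‖x - y‖ ^ 2
  have hmax : IsLocalMaxOn ψ (Icc 0 1) 0 :=
    Filter.eventually_of_mem self_mem_nhdsWithin fun t ht => by
      simpa [ψ] using (by linarith [hf.apply_add_smul_sub_le hx hy hyx ht] : ψ t ≤ f x)
  have hline : HasDerivAt (fun t : ℝ => x + t • (y - x)) (y - x) 0 := by
    simpa using ((hasDerivAt_id (0 : ℝ)).smul_const (y - x)).const_add x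
  have hψ : HasDerivAt ψ (f' (y - x) + s * ‖x - y‖ ^ 2) 0 := by
    have hq : HasDerivAt (fun t : ℝ => s * t * (1 - t) * ‖x - y‖ ^ 2) (s * ‖x - y‖ ^ 2) 0 := by
      simpa using (((hasDerivAt_id' (0 : ℝ)).const_mul s).mul
        ((hasDerivAt_id' 0).const_sub 1)).mul_const (‖x - y‖ ^ 2)
    exact ((by simpa using hf' : HasFDerivAt f f' (x + (0 : ℝ) • (y - x))).comp_hasDerivAt
      0 hline).add hq
  have h1 : (1 : ℝ) ∈ posTangentConeAt (Icc 0 1) 0 :=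
    mem_posTangentConeAt_of_segment_subset (by simp [segment_eq_Icc])
  have := hmax.hasFDerivWithinAt_nonpos hψ.hasFDerivAt.hasFDerivWithinAt h1
  simp only [ContinuousLinearMap.toSpanSingleton_apply, one_smul] at this
  linarith [show f' (x - y) = -f' (y - x) by rw [← map_neg, neg_sub]]

lemma isMinOn_of_isLocalMin (hs : 0 < s) (hf : StronglyQuasiconvexOn s D f) (hx : x ∈ D)
    (hmin : IsLocalMin f x) : IsMinOn f D x := by
  intro y hy
  by_contra! hyx
  simp only [mem_ofPred_eq, not_le] at hyx
  have hxy : x ≠ y := by rintro rfl; exact hyx.false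
  have hline : Tendsto (fun t : ℝ => x + t • (y - x)) (𝓝[>] 0) (𝓝 x) :=
    tendsto_nhdsWithin_of_tendsto_nhds (Continuous.tendsto' (by fun_prop) _ _ (by simp))
  obtain ⟨t, hxt, ht⟩ := ((hline.eventually hmin).and (Ioo_mem_nhdsGT one_pos)).exists
  have hdesc := hf.apply_add_smul_sub_le hx hy hyx.le ⟨ht.1.le, ht.2.le⟩
  have : 0 < s * t * (1 - t) * ‖x - y‖ ^ 2 := by
    have := sub_pos.2 ht.2
    have := norm_sub_pos_iff.2 hxy
    have := ht.1
    positivity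
  linarith

lemma eq_of_isMinOn (hs : 0 < s) (hf : StronglyQuasiconvexOn s D f) (hx : x ∈ D) (hy : y ∈ D)
    (hmin : IsMinOn f D x) (hyx : f y ≤ f x) : x = y := by
  have hhalf : (1 / 2 : ℝ) ∈ Icc (0 : ℝ) 1 := ⟨by norm_num, by norm_num⟩
  have h1 := hf.apply_add_smul_sub_le hx hy hyx hhalf
  have h2 := hmin (hf.1.add_smul_sub_mem hx hy hhalf)
  have : ‖x - y‖ ^ 2 ≤ 0 := by
    simp only [mem_ofPred_eq] at h2
    nlinarith
  simpa [sub_eq_zero] using this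

end StronglyQuasiconvexOn

lemma IsPreconnected.eq_singleton_of_inter_subset {X : Type*} [TopologicalSpace X] [T1Space X]
    {S U : Set X} {p : X} (hS : IsPreconnected S) (hpS : p ∈ S) (hU : IsOpen U) (hpU : p ∈ U)
    (hSU : S ∩ U ⊆ {p}) : S = {p} := by
  refine eq_singleton_iff_unique_mem.2 ⟨hpS, fun q hqS => ?_⟩
  by_contra hqp
  obtain ⟨r, hrS, hrU, hrp⟩ := hS U {p}ᶜ hU isOpen_compl_singleton
    (fun a _ => by rcases eq_or_ne a p with rfl | h; exacts [Or.inl hpU, Or.inr h])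
    ⟨p, hpS, hpU⟩ ⟨q, hqS, hqp⟩
  exact hrp (hSU ⟨hrS, hrU⟩)

def JointlyStronglyQcQcOn (s : ℝ) (U : Set (En n × En m)) (F : En n × En m → ℝ) : Prop :=
  ∀ q ∈ U, StronglyQuasiconvexOn s {x : En n | (x, q.2) ∈ U} (fun x => F (x, q.2)) ∧
    StronglyQuasiconvexOn s {z : En m | (q.1, z) ∈ U} (fun z => -F (q.1, z))

namespace IsSaddlePoint

variable {F : En n × En m → ℝ} {p : En n × En m} {s : ℝ} {U : Set (En n × En m)}

lemma isLocalMin_fst (hp : IsSaddlePoint F p) : IsLocalMin (fun x => F (x, p.2)) p.1 := by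
  obtain ⟨U, W, hU, -, hpU, hpW, hsad⟩ := hp
  filter_upwards [hU.mem_nhds hpU] with x hx using (hsad x hx p.2 hpW).2

lemma isLocalMin_neg_snd (hp : IsSaddlePoint F p) :
    IsLocalMin (fun z => -F (p.1, z)) p.2 := by
  obtain ⟨U, W, -, hW, hpU, hpW, hsad⟩ := hp
  filter_upwards [hW.mem_nhds hpW] with z hz using neg_le_neg (hsad p.1 hpU z hz).1

lemma isMinOn_fst (hs : 0 < s) (hU : JointlyStronglyQcQcOn s U F) (hp : IsSaddlePoint F p)
    (hpU : p ∈ U) : IsMinOn (fun x => F (x, p.2)) {x | (x, p.2) ∈ U} p.1 :=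
  (hU p hpU).1.isMinOn_of_isLocalMin hs hpU hp.isLocalMin_fst

lemma isMinOn_neg_snd (hs : 0 < s) (hU : JointlyStronglyQcQcOn s U F) (hp : IsSaddlePoint F p)
    (hpU : p ∈ U) : IsMinOn (fun z => -F (p.1, z)) {z | (p.1, z) ∈ U} p.2 :=
  (hU p hpU).2.isMinOn_of_isLocalMin hs hpU hp.isLocalMin_neg_snd

lemma eq_of_dist_lt (hs : 0 < s) (hU : JointlyStronglyQcQcOn s U F) {ε : ℝ}
    (hball : ball p ε ⊆ U) (hp : IsSaddlePoint F p) {q : En n × En m} (hq : IsSaddlePoint F q)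
    (hqp : dist q p < ε) : q = p := by
  have hε : 0 < ε := dist_nonneg.trans_lt hqp
  rw [Prod.dist_eq, max_lt_iff] at hqp
  have hpU : p ∈ U := hball (mem_ball_self hε)
  have hqU : q ∈ U := hball (by rwa [mem_ball, Prod.dist_eq, max_lt_iff])
  have hpq : (p.1, q.2) ∈ U := hball (by simpa [Prod.dist_eq, hε] using hqp.2)
  have hqp' : (q.1, p.2) ∈ U := hball (by simpa [Prod.dist_eq, hε] using hqp.1)
  -- The four values at the corners of the rectangle spanned by `p` and `q` are equal.
  have e1 : F q ≤ F (p.1, q.2) := hq.isMinOn_fst hs hU hqU hpq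
  have e2 : F (p.1, q.2) ≤ F p := neg_le_neg_iff.1 (hp.isMinOn_neg_snd hs hU hpU hpq)
  have e3 : F p ≤ F (q.1, p.2) := hp.isMinOn_fst hs hU hpU hqp'
  have e4 : F (q.1, p.2) ≤ F q := neg_le_neg_iff.1 (hq.isMinOn_neg_snd hs hU hqU hqp')
  have h1 : q.1 = p.1 :=
    (hU q hqU).1.eq_of_isMinOn hs hqU hpq (hq.isMinOn_fst hs hU hqU)
      (show F (p.1, q.2) ≤ F q by linarith)
  have h2 : q.2 = p.2 :=
    (hU q hqU).2.eq_of_isMinOn hs hqU hqp' (hq.isMinOn_neg_snd hs hU hqU)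
      (show -F (q.1, p.2) ≤ -F q by linarith)
  exact Prod.ext h1 h2

lemma exists_ball_inter_saddleSet_subset (hp : IsSaddlePoint F p)
    (hqc : LocallyJointlyStronglyQcQcAt F p) : ∃ ε > 0, ball p ε ∩ SaddleSet F ⊆ {p} := by
  obtain ⟨s, hs, U, hUo, hpU, hU⟩ := hqc
  obtain ⟨ε, hε, hball⟩ := Metric.isOpen_iff.1 hUo p hpU
  exact ⟨ε, hε, fun q ⟨hqp, hq⟩ => hp.eq_of_dist_lt hs hU hball hq hqp⟩

end IsSaddlePoint

lemma eq_singleton_of_isPathConnected_subset_saddleSet {F : En n × En m → ℝ}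
    (hqcqc : ∀ p ∈ SaddleSet F, LocallyJointlyStronglyQcQcAt F p) {S : Set (En n × En m)}
    {p : En n × En m} (hpS : p ∈ S) (hS : IsPathConnected S) (hSsad : S ⊆ SaddleSet F) :
    S = {p} := by
  obtain ⟨ε, hε, hiso⟩ :=
    IsSaddlePoint.exists_ball_inter_saddleSet_subset (hSsad hpS) (hqcqc p (hSsad hpS))
  exact hS.isConnected.isPreconnected.eq_singleton_of_inter_subset hpS isOpen_ball
    (mem_ball_self hε) fun q ⟨hqS, hq⟩ => hiso ⟨hq, hSsad hqS⟩

lemma ContDiff.differentiable_fderiv {E G : Type*} [NormedAddCommGroup E] [NormedSpace ℝ E]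
    [NormedAddCommGroup G] [NormedSpace ℝ G] {f : E → G} (hf : ContDiff ℝ 2 f) :
    Differentiable ℝ (fderiv ℝ f) :=
  (hf.fderiv_right (m := 1) (by norm_num)).differentiable (by norm_num)

section PartialDerivatives

open ContinuousLinearMap InnerProductSpace RealInnerProductSpace

variable {F : En n × En m → ℝ}

lemma hasFDerivAt_comp_mk_left {q : En n × En m} (hF : DifferentiableAt ℝ F q) :
    HasFDerivAt (fun x => F (x, q.2)) ((fderiv ℝ F q).comp (inl ℝ (En n) (En m))) q.1 :=
  hF.hasFDerivAt.comp q.1 (hasFDerivAt_prodMk_left q.1 q.2)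

lemma hasFDerivAt_comp_mk_right {q : En n × En m} (hF : DifferentiableAt ℝ F q) :
    HasFDerivAt (fun z => F (q.1, z)) ((fderiv ℝ F q).comp (inr ℝ (En n) (En m))) q.2 :=
  hF.hasFDerivAt.comp q.2 (hasFDerivAt_prodMk_right q.1 q.2)

lemma gradX_eq {q : En n × En m} (hF : DifferentiableAt ℝ F q) :
    gradX F q = (toDual ℝ (En n)).symm ((fderiv ℝ F q).comp (inl ℝ (En n) (En m))) := by
  rw [gradX, gradient, (hasFDerivAt_comp_mk_left hF).fderiv]

lemma inner_gradX {q : En n × En m} (hF : DifferentiableAt ℝ F q) (v : En n) :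
    ⟪gradX F q, v⟫ = fderiv ℝ F q (v, 0) := by
  rw [gradX_eq hF, toDual_symm_apply]
  rfl

lemma inner_gradZ {q : En n × En m} (hF : DifferentiableAt ℝ F q) (w : En m) :
    ⟪gradZ F q, w⟫ = fderiv ℝ F q (0, w) := by
  rw [gradZ, gradient, (hasFDerivAt_comp_mk_right hF).fderiv, toDual_symm_apply]
  rfl

lemma differentiable_gradX_mk (hF : ContDiff ℝ 2 F) (x : En n) :
    Differentiable ℝ (fun z => gradX F (x, z)) := by
  have h : (fun z => gradX F (x, z)) = fun z =>
      (toDual ℝ (En n)).symm ((fderiv ℝ F (x, z)).comp (inl ℝ (En n) (En m))) :=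
    funext fun z => gradX_eq (hF.differentiable (by norm_num) _)
  rw [h]
  have hF' := hF.differentiable_fderiv
  exact (toDual ℝ (En n)).symm.differentiable.comp (by fun_prop)

lemma inner_mixedXZ (hF : ContDiff ℝ 2 F) (q : En n × En m) (v : En n) (w : En m) :
    ⟪mixedXZ F q w, v⟫ = fderiv ℝ (fderiv ℝ F) q (0, w) (v, 0) := by
  have hF' := hF.differentiable_fderiv
  have hL : HasFDerivAt (fun z => ⟪v, gradX F (q.1, z)⟫)
      ((innerSL ℝ v).comp (mixedXZ F q)) q.2 :=
    (innerSL ℝ v).hasFDerivAt.comp _ (differentiable_gradX_mk hF q.1 q.2).hasFDerivAt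
  have hR : HasFDerivAt (fun z => ⟪v, gradX F (q.1, z)⟫)
      ((apply ℝ ℝ ((v, 0) : En n × En m)).comp
        ((fderiv ℝ (fderiv ℝ F) q).comp (inr ℝ (En n) (En m)))) q.2 := by
    have h : (fun z => ⟪v, gradX F (q.1, z)⟫) = fun z => fderiv ℝ F (q.1, z) (v, 0) :=
      funext fun z => by rw [real_inner_comm, inner_gradX (hF.differentiable (by norm_num) _)]
    rw [h]
    exact (apply ℝ ℝ _).hasFDerivAt.comp _
      ((hF' (q.1, q.2)).hasFDerivAt.comp q.2 (hasFDerivAt_prodMk_right q.1 q.2))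
  simpa [real_inner_comm] using congrArg (· w) (hL.unique hR)

end PartialDerivatives

section MixedRemainder

open ContinuousLinearMap RealInnerProductSpace

variable {F : En n × En m → ℝ}

lemma hasDerivAt_inner_gradX_line (hF : ContDiff ℝ 2 F) (x : En n) (z w : En m) (v : En n)
    (τ : ℝ) :
    HasDerivAt (fun τ : ℝ => ⟪gradX F (x, z + τ • w), v⟫) ⟪mixedXZ F (x, z + τ • w) w, v⟫ τ := by
  have hline : HasDerivAt (fun τ : ℝ => z + τ • w) w τ := by
    simpa using ((hasDerivAt_id τ).smul_const w).const_add z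
  have h := ((differentiable_gradX_mk hF x _).hasFDerivAt.comp_hasDerivAt τ hline).inner ℝ
    (hasDerivAt_const τ v)
  simp only [inner_zero_right, zero_add] at h
  exact h

lemma hasDerivAt_inner_gradZ_line (hF : ContDiff ℝ 2 F) (x v : En n) (z w : En m) (σ : ℝ) :
    HasDerivAt (fun σ : ℝ => ⟪gradZ F (x + σ • v, z), w⟫) ⟪mixedXZ F (x + σ • v, z) w, v⟫ σ := by
  have hF' := hF.differentiable_fderiv
  have hline : HasDerivAt (fun σ : ℝ => ((x + σ • v, z) : En n × En m)) (v, 0) σ := by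
    simpa using (((hasDerivAt_id σ).smul_const v).const_add x).prodMk (hasDerivAt_const σ z)
  have h := ((hF' _).hasFDerivAt.comp_hasDerivAt σ hline).clm_apply
    (hasDerivAt_const σ ((0, w) : En n × En m))
  simp only [Function.comp_def, map_zero, add_zero] at h
  have hsymm := hF.contDiffAt.isSymmSndFDerivAt (x := (x + σ • v, z)) (by simp)
  rw [funext fun σ => inner_gradZ (hF.differentiable (by norm_num) (x + σ • v, z)) w,
    inner_mixedXZ hF, hsymm]
  exact h

lemma norm_smul_le_of_mem_Icc {E : Type*} [SeminormedAddCommGroup E] [NormedSpace ℝ E] {τ : ℝ}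
    (hτ : τ ∈ Icc (0 : ℝ) 1) (v : E) : ‖τ • v‖ ≤ ‖v‖ := by
  rw [norm_smul, Real.norm_of_nonneg hτ.1]
  exact mul_le_of_le_one_left (norm_nonneg v) hτ.2

lemma abs_inner_grad_sub_inner_grad_le (hF : ContDiff ℝ 2 F) {p q : En n × En m} {K : NNReal}
    {r : ℝ} (hK : LipschitzOnWith K (mixedXZ F) (closedBall p r)) (hq : q ∈ closedBall p r) :
    |(⟪gradX F q, q.1 - p.1⟫ - ⟪gradZ F q, q.2 - p.2⟫) -
        (⟪gradX F (q.1, p.2), q.1 - p.1⟫ - ⟪gradZ F (p.1, q.2), q.2 - p.2⟫)| ≤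
      K * dist q p * (‖q.2 - p.2‖ * ‖q.1 - p.1‖) := by
  obtain ⟨x, z⟩ := q
  set a := x - p.1
  set b := z - p.2
  -- `g 1 - g 0` is the quantity to bound; by symmetry of the Hessian, `g'` compares the mixed
  -- derivative at two points at distance at most `dist q p`.
  set g : ℝ → ℝ := fun τ => ⟪gradX F (x, p.2 + τ • b), a⟫ - ⟪gradZ F (p.1 + τ • a, z), b⟫
  have hg : ∀ τ, HasDerivAt g
      ⟪(mixedXZ F (x, p.2 + τ • b) - mixedXZ F (p.1 + τ • a, z)) b, a⟫ τ := fun τ => by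
    rw [sub_apply, inner_sub_left]
    exact (hasDerivAt_inner_gradX_line hF x p.2 b a τ).sub
      (hasDerivAt_inner_gradZ_line hF p.1 a z b τ)
  have hmem : ∀ τ ∈ Icc (0 : ℝ) 1,
      dist ((x, p.2 + τ • b) : En n × En m) p ≤ dist (x, z) p ∧
      dist ((p.1 + τ • a, z) : En n × En m) p ≤ dist (x, z) p ∧
      dist ((x, p.2 + τ • b) : En n × En m) (p.1 + τ • a, z) ≤ dist (x, z) p := by
    intro τ hτ
    have h1τ : 1 - τ ∈ Icc (0 : ℝ) 1 := ⟨by linarith [hτ.2], by linarith [hτ.1]⟩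
    simp only [dist_eq_norm]
    refine ⟨max_le_max le_rfl ?_, max_le_max ?_ le_rfl, max_le_max ?_ ?_⟩
    · simpa using norm_smul_le_of_mem_Icc hτ b
    · simpa using norm_smul_le_of_mem_Icc hτ a
    · simpa [a, show x - (p.1 + τ • (x - p.1)) = (1 - τ) • (x - p.1) by module]
        using norm_smul_le_of_mem_Icc h1τ a
    · simpa [b, norm_sub_rev, show z - (p.2 + τ • (z - p.2)) = (1 - τ) • (z - p.2) by module]
        using norm_smul_le_of_mem_Icc h1τ b
  have hmv := norm_image_sub_le_of_norm_deriv_le_segment_01'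
    (fun τ _ => (hg τ).hasDerivWithinAt) fun τ hτ => by
      obtain ⟨h1, h2, h12⟩ := hmem τ (Ico_subset_Icc_self hτ)
      calc ‖⟪(mixedXZ F (x, p.2 + τ • b) - mixedXZ F (p.1 + τ • a, z)) b, a⟫‖
          ≤ ‖mixedXZ F (x, p.2 + τ • b) - mixedXZ F (p.1 + τ • a, z)‖ * ‖b‖ * ‖a‖ :=
            (norm_inner_le_norm _ _).trans
              (mul_le_mul_of_nonneg_right (le_opNorm _ _) (norm_nonneg _))
        _ ≤ K * dist (x, z) p * ‖b‖ * ‖a‖ := by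
            gcongr
            rw [← dist_eq_norm]
            exact (hK.dist_le_mul _ (h1.trans hq) _ (h2.trans hq)).trans
              (mul_le_mul_of_nonneg_left h12 K.coe_nonneg)
  simpa [g, a, b, mul_assoc] using hmv

end MixedRemainder

section Coercivity

open RealInnerProductSpace

variable {F : En n × En m → ℝ} {p : En n × En m} {s : ℝ} {U : Set (En n × En m)}

lemma IsSaddlePoint.mul_norm_sq_le_inner_gradX (hs : 0 < s) (hU : JointlyStronglyQcQcOn s U F)
    (hp : IsSaddlePoint F p) (hpU : p ∈ U) {x : En n} (hx : (x, p.2) ∈ U)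
    (hF : DifferentiableAt ℝ F (x, p.2)) :
    s * ‖x - p.1‖ ^ 2 ≤ ⟪gradX F (x, p.2), x - p.1⟫ := by
  rw [inner_gradX hF]
  exact (hU _ hx).1.mul_norm_sub_sq_le hx hpU (hp.isMinOn_fst hs hU hpU hx)
    (hasFDerivAt_comp_mk_left hF)

lemma IsSaddlePoint.mul_norm_sq_le_neg_inner_gradZ (hs : 0 < s)
    (hU : JointlyStronglyQcQcOn s U F) (hp : IsSaddlePoint F p) (hpU : p ∈ U) {z : En m}
    (hz : (p.1, z) ∈ U) (hF : DifferentiableAt ℝ F (p.1, z)) :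
    s * ‖z - p.2‖ ^ 2 ≤ -⟪gradZ F (p.1, z), z - p.2⟫ := by
  rw [inner_gradZ hF]
  exact (hU _ hz).2.mul_norm_sub_sq_le hz hpU (hp.isMinOn_neg_snd hs hU hpU hz)
    (hasFDerivAt_comp_mk_right hF).neg

lemma dist_sq_le_norm_sub_sq_add {E E' : Type*} [SeminormedAddCommGroup E]
    [SeminormedAddCommGroup E'] (q p : E × E') :
    dist q p ^ 2 ≤ ‖q.1 - p.1‖ ^ 2 + ‖q.2 - p.2‖ ^ 2 := by
  rw [Prod.dist_eq, dist_eq_norm, dist_eq_norm]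
  rcases max_cases ‖q.1 - p.1‖ ‖q.2 - p.2‖ with ⟨h, -⟩ | ⟨h, -⟩ <;> rw [h] <;>
    nlinarith [sq_nonneg ‖q.1 - p.1‖, sq_nonneg ‖q.2 - p.2‖]

lemma norm_sub_sq_add_le {E E' : Type*} [SeminormedAddCommGroup E]
    [SeminormedAddCommGroup E'] (q p : E × E') :
    ‖q.1 - p.1‖ ^ 2 + ‖q.2 - p.2‖ ^ 2 ≤ 2 * dist q p ^ 2 := by
  have h1 : ‖q.1 - p.1‖ ≤ dist q p := by rw [Prod.dist_eq, ← dist_eq_norm]; exact le_max_left _ _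
  have h2 : ‖q.2 - p.2‖ ≤ dist q p := by
    rw [Prod.dist_eq, ← dist_eq_norm]; exact le_max_right _ _
  nlinarith [norm_nonneg (q.1 - p.1), norm_nonneg (q.2 - p.2)]

lemma IsSaddlePoint.exists_mul_le_inner_grad (hF : ContDiff ℝ 2 F)
    (hlip : LocallyLipschitz (mixedXZ F)) (hp : IsSaddlePoint F p)
    (hqc : LocallyJointlyStronglyQcQcAt F p) :
    ∃ c > (0 : ℝ), ∃ r > (0 : ℝ), ∀ q ∈ closedBall p r,
      c * (‖q.1 - p.1‖ ^ 2 + ‖q.2 - p.2‖ ^ 2) ≤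
        ⟪gradX F q, q.1 - p.1⟫ - ⟪gradZ F q, q.2 - p.2⟫ := by
  obtain ⟨s, hs, U, hUo, hpU, hU⟩ := hqc
  obtain ⟨K, t, ht, hK⟩ := hlip p
  obtain ⟨r, hr, hrUt⟩ :=
    Metric.nhds_basis_closedBall.mem_iff.1 (Filter.inter_mem (hUo.mem_nhds hpU) ht)
  set r' := min r (s / (K + 1))
  have hr' : 0 < r' := lt_min hr (by positivity)
  have hsub : closedBall p r' ⊆ U ∩ t := (closedBall_subset_closedBall (min_le_left _ _)).trans hrUt
  refine ⟨s / 2, by positivity, r', hr', fun q hq => ?_⟩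
  have hd : max (dist q.1 p.1) (dist q.2 p.2) ≤ r' := by rw [← Prod.dist_eq]; exact hq
  have hF1 := hF.differentiable (by norm_num)
  have hx : (q.1, p.2) ∈ closedBall p r' := by
    simpa [Prod.dist_eq, hr'.le] using (le_max_left _ _).trans hd
  have hz : (p.1, q.2) ∈ closedBall p r' := by
    simpa [Prod.dist_eq, hr'.le] using (le_max_right _ _).trans hd
  have E1 := hp.mul_norm_sq_le_inner_gradX hs hU hpU (hsub hx).1 (hF1 _)
  have E2 := hp.mul_norm_sq_le_neg_inner_gradZ hs hU hpU (hsub hz).1 (hF1 _)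
  have E3 := abs_inner_grad_sub_inner_grad_le hF (hK.mono fun y hy => (hsub hy).2) hq
  have hKd : K * dist q p ≤ s := by
    have hK1 : (K : ℝ) ≤ K + 1 := by linarith
    calc (K : ℝ) * dist q p ≤ (K + 1) * (s / (K + 1)) :=
          mul_le_mul hK1 ((mem_closedBall.1 hq).trans (min_le_right _ _)) dist_nonneg
            (by positivity)
      _ = s := by field_simp
  have hab : ‖q.2 - p.2‖ * ‖q.1 - p.1‖ ≤ (‖q.1 - p.1‖ ^ 2 + ‖q.2 - p.2‖ ^ 2) / 2 := by
    nlinarith [sq_nonneg (‖q.1 - p.1‖ - ‖q.2 - p.2‖)]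
  have := mul_le_mul hKd hab (by positivity) hs.le
  linarith [neg_abs_le (⟪gradX F q, q.1 - p.1⟫ - ⟪gradZ F q, q.2 - p.2⟫ -
    (⟪gradX F (q.1, p.2), q.1 - p.1⟫ - ⟪gradZ F (p.1, q.2), q.2 - p.2⟫))]

end Coercivity

lemma le_mul_exp_of_hasDerivAt_le_neg_mul {w u : ℝ → ℝ} {c R : ℝ} (hc : 0 < c)
    (hw : ∀ t, 0 ≤ t → HasDerivAt w (u t) t) (hw0 : 0 ≤ w 0) (hR : w 0 < R)
    (hu : ∀ t, 0 ≤ t → w t < R → u t ≤ -c * w t) {t : ℝ} (ht : 0 ≤ t) :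
    w t ≤ w 0 * Real.exp (-c * t) := by
  refine le_of_forall_pos_le_add fun ε hε => ?_
  set δ := min ε ((R - w 0) / 2)
  have hδ : 0 < δ := lt_min hε (by linarith)
  -- `w` cannot cross the barrier `w 0 * exp (-c τ) + δ`: the barrier stays below `R`, where `w`
  -- decreases faster than the barrier does.
  have hB : ∀ τ, HasDerivAt (fun τ => w 0 * Real.exp (-c * τ) + δ)
      (w 0 * (Real.exp (-c * τ) * -c)) τ := fun τ => by
    simpa using ((((hasDerivAt_id τ).const_mul (-c)).exp).const_mul (w 0)).add_const δ
  have hfence := image_le_of_deriv_right_lt_deriv_boundary (a := 0) (b := t)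
    (fun τ hτ => (hw τ hτ.1).continuousAt.continuousWithinAt)
    (fun τ hτ => (hw τ hτ.1).hasDerivWithinAt) (by simp [hδ.le]) hB
    (fun τ hτ hwτ => by
      have hexp : Real.exp (-c * τ) ≤ 1 := Real.exp_le_one_iff.2 (by nlinarith [hτ.1])
      have hlt : w τ < R := by
        rw [hwτ]
        nlinarith [min_le_right ε ((R - w 0) / 2)]
      nlinarith [hu τ hτ.1 hlt])
    ⟨ht, le_rfl⟩
  linarith [min_le_left ε ((R - w 0) / 2)]

open RealInnerProductSpace in
lemma IsSaddlePoint.exists_dist_le_mul_exp {F : En n × En m → ℝ} {p : En n × En m}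
    (hF : ContDiff ℝ 2 F) (hlip : LocallyLipschitz (mixedXZ F)) (hp : IsSaddlePoint F p)
    (hqc : LocallyJointlyStronglyQcQcAt F p) :
    ∃ c > (0 : ℝ), ∃ δ > (0 : ℝ), ∀ φ : ℝ → En n × En m, IsTrajectory F φ →
      dist (φ 0) p < δ → ∀ t, 0 ≤ t → dist (φ t) p ≤ 2 * dist (φ 0) p * Real.exp (-c * t) := by
  obtain ⟨c, hc, r, hr, hcoer⟩ := hp.exists_mul_le_inner_grad hF hlip hqc
  refine ⟨c, hc, r / 2, by positivity, fun φ hφ h0 t ht => ?_⟩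
  set w : ℝ → ℝ := fun τ => ‖(φ τ).1 - p.1‖ ^ 2 + ‖(φ τ).2 - p.2‖ ^ 2
  have hw : ∀ τ, 0 ≤ τ → HasDerivAt w (2 * ⟪(φ τ).1 - p.1, -gradX F (φ τ)⟫ +
      2 * ⟪(φ τ).2 - p.2, gradZ F (φ τ)⟫) τ := fun τ hτ => by
    have h1 : HasDerivAt (fun τ => (φ τ).1) (-gradX F (φ τ)) τ :=
      (ContinuousLinearMap.fst ℝ (En n) (En m)).hasFDerivAt.comp_hasDerivAt τ (hφ τ hτ)
    have h2 : HasDerivAt (fun τ => (φ τ).2) (gradZ F (φ τ)) τ :=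
      (ContinuousLinearMap.snd ℝ (En n) (En m)).hasFDerivAt.comp_hasDerivAt τ (hφ τ hτ)
    exact (h1.sub_const p.1).norm_sq.add (h2.sub_const p.2).norm_sq
  have hw0 : w 0 < r ^ 2 := by
    nlinarith [norm_sub_sq_add_le (φ 0) p, dist_nonneg (x := φ 0) (y := p)]
  have hdecay := le_mul_exp_of_hasDerivAt_le_neg_mul (by positivity : 0 < 2 * c) hw
    (by positivity) hw0 (fun τ _ hτ => by
      have hq : φ τ ∈ closedBall p r := by
        rw [mem_closedBall]
        nlinarith [dist_sq_le_norm_sub_sq_add (φ τ) p, dist_nonneg (x := φ τ) (y := p)]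
      have := hcoer _ hq
      rw [inner_neg_right, real_inner_comm (gradX F (φ τ)), real_inner_comm (gradZ F (φ τ))]
      linarith) ht
  have hexp : Real.exp (-(2 * c) * t) = Real.exp (-c * t) ^ 2 := by
    rw [sq, ← Real.exp_add]; ring_nf
  refine (pow_le_pow_iff_left₀ dist_nonneg (by positivity) two_ne_zero).1 ?_
  calc dist (φ t) p ^ 2 ≤ w t := dist_sq_le_norm_sub_sq_add (φ t) p
    _ ≤ w 0 * Real.exp (-(2 * c) * t) := hdecay
    _ ≤ (2 * dist (φ 0) p * Real.exp (-c * t)) ^ 2 := by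
      rw [hexp]
      nlinarith [norm_sub_sq_add_le (φ 0) p, sq_nonneg (dist (φ 0) p * Real.exp (-c * t))]

theorem stmt_4_general {n m : ℕ} (F : En n × En m → ℝ) (hF : ContDiff ℝ 2 F)
    (hlip : LocallyLipschitz (mixedXZ F))
    (hqcqc : ∀ p ∈ SaddleSet F, LocallyJointlyStronglyQcQcAt F p)
    (S : Set (En n × En m)) (hSne : S.Nonempty)
    (hS : IsIsolatedPathComponent S (SaddleSet F)) :
    (∀ ε > 0, ∃ δ > 0, ∀ φ : ℝ → En n × En m, IsTrajectory F φ →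
      infDist (φ 0) S < δ → ∀ t : ℝ, 0 ≤ t → infDist (φ t) S < ε) ∧
    (∃ δ > 0, ∀ φ : ℝ → En n × En m, IsTrajectory F φ → infDist (φ 0) S < δ →
      ∃ q ∈ S, Tendsto φ atTop (𝓝 q)) := by
  obtain ⟨p, hpS⟩ := hSne
  have hp : IsSaddlePoint F p := hS.1 hpS
  obtain rfl : S = {p} :=
    eq_singleton_of_isPathConnected_subset_saddleSet hqcqc hpS
      ⟨p, hpS, fun _ hq => hS.2.1 p hpS _ hq⟩ hS.1
  obtain ⟨c, hc, δ, hδ, hdecay⟩ := hp.exists_dist_le_mul_exp hF hlip (hqcqc p hp)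
  simp only [infDist_singleton, mem_singleton_iff, exists_eq_left]
  refine ⟨fun ε hε => ⟨min δ (ε / 2), by positivity, fun φ hφ h0 t ht => ?_⟩,
    ⟨δ, hδ, fun φ hφ h0 => ?_⟩⟩
  · have hexp : Real.exp (-c * t) ≤ 1 := Real.exp_le_one_iff.2 (by nlinarith)
    have := hdecay φ hφ (h0.trans_le (min_le_left _ _)) t ht
    nlinarith [h0.trans_le (min_le_right _ _), dist_nonneg (x := φ 0) (y := p)]
  · have hlim : Tendsto (fun t => 2 * dist (φ 0) p * Real.exp (-c * t)) atTop (𝓝 0) := by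
      simpa using (Real.tendsto_exp_atBot.comp
        (tendsto_id.const_mul_atTop_of_neg (neg_neg_of_pos hc))).const_mul (2 * dist (φ 0) p)
    refine tendsto_iff_dist_tendsto_zero.2 (squeeze_zero' (.of_forall fun _ => dist_nonneg)
      ?_ hlim)
    filter_upwards [eventually_ge_atTop 0] with t ht using hdecay φ hφ h0 t ht

/-- Proposition: local asymptotic stability via strong
quasiconvexity-quasiconcavity. If `F` is `C²` with locally Lipschitz mixed second derivative
`∇ₓ_z F` and is locally jointly strongly quasiconvex-quasiconcave on its (nonempty) saddle set,
then every nonempty isolated path connected component `S` of the saddle set is locally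
asymptotically stable, with trajectories starting sufficiently close converging to a single
point of `S`. -/
theorem stmt_4 {n m : ℕ} (F : En n × En m → ℝ) (hF : ContDiff ℝ 2 F)
    (hne : (SaddleSet F).Nonempty)
    (hlip : LocallyLipschitz (mixedXZ F))
    (hqcqc : ∀ p ∈ SaddleSet F, LocallyJointlyStronglyQcQcAt F p)
    (S : Set (En n × En m)) (hSne : S.Nonempty)
    (hS : IsIsolatedPathComponent S (SaddleSet F)) :
    (∀ ε > 0, ∃ δ > 0, ∀ φ : ℝ → En n × En m, IsTrajectory F φ →
      infDist (φ 0) S < δ → ∀ t : ℝ, 0 ≤ t → infDist (φ t) S < ε) ∧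
    (∃ δ > 0, ∀ φ : ℝ → En n × En m, IsTrajectory F φ → infDist (φ 0) S < δ →
      ∃ q ∈ S, Tendsto φ atTop (𝓝 q)) :=
  stmt_4_general F hF hlip hqcqc S hSne hS
end
end

section
/- Let f : ℝⁿ → ℝ be continuously differentiable and strongly quasiconvex with parameter s > 0 on a convex set D ⊂ ℝⁿ. Then for all x, y ∈ D with f(x) ≤ f(y), one has ∇f(y)ᵀ(x − y) ≤ −s‖x − y‖². -/
open Set

noncomputable section

/-! Along the segment from `y` to a point `x` with `f x ≤ f y`, strong quasiconvexity gives
`f (y + t (x - y)) - f y ≤ -s t (1 - t) ‖x - y‖²`; dividing by `t` and letting `t → 0⁺` bounds the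
directional derivative `f'(y)(x - y)` by `-s ‖x - y‖²`. -/

open Filter Topology

theorem le_neg_of_hasDerivWithinAt_of_sub_le {g : ℝ → ℝ} {g' c : ℝ}
    (hg : HasDerivWithinAt g g' (Ioi 0) 0)
    (hdec : ∀ t ∈ Ioo (0 : ℝ) 1, g t - g 0 ≤ -(c * t * (1 - t))) : g' ≤ -c := by
  have hslope : Tendsto (slope g 0) (𝓝[>] 0) (𝓝 g') :=
    (hasDerivWithinAt_iff_tendsto_slope' (lt_irrefl 0)).mp hg
  have hrate : Tendsto (fun t : ℝ => -(c * (1 - t))) (𝓝[>] 0) (𝓝 (-c)) := by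
    have : Continuous fun t : ℝ => -(c * (1 - t)) := by fun_prop
    simpa using this.continuousWithinAt (s := Ioi 0) (x := 0) |>.tendsto
  refine le_of_tendsto_of_tendsto hslope hrate ?_
  filter_upwards [Ioo_mem_nhdsGT (zero_lt_one' ℝ)] with t ht
  rw [slope_def_field, sub_zero, div_le_iff₀ ht.1]
  linarith [hdec t ht]

namespace StronglyQuasiconvexOn

variable {X : Type*} [NormedAddCommGroup X] [NormedSpace ℝ X] {s : ℝ} {D : Set X} {f : X → ℝ}
  {x y : X}

theorem apply_add_smul_sub_le_of_le (hqc : StronglyQuasiconvexOn s D f) (hx : x ∈ D)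
    (hy : y ∈ D) (hxy : f x ≤ f y) {t : ℝ} (ht : t ∈ Icc (0 : ℝ) 1) :
    f (y + t • (x - y)) - f y ≤ -(s * ‖x - y‖ ^ 2 * t * (1 - t)) := by
  have h := hqc.2 x hx y hy t ht
  rw [max_eq_right hxy, show t • x + (1 - t) • y = y + t • (x - y) by module] at h
  linarith

theorem fderiv_apply_sub_le (hqc : StronglyQuasiconvexOn s D f) (hx : x ∈ D) (hy : y ∈ D)
    (hxy : f x ≤ f y) (hf : DifferentiableAt ℝ f y) :
    fderiv ℝ f y (x - y) ≤ -(s * ‖x - y‖ ^ 2) := by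
  have hline : HasDerivAt (fun t : ℝ => y + t • (x - y)) (x - y) 0 := by
    simpa using ((hasDerivAt_id (0 : ℝ)).smul_const (x - y)).const_add y
  have hg : HasDerivAt (fun t : ℝ => f (y + t • (x - y))) (fderiv ℝ f y (x - y)) 0 :=
    (by simpa using hf.hasFDerivAt : HasFDerivAt f (fderiv ℝ f y) (y + (0 : ℝ) • (x - y)))
      |>.comp_hasDerivAt 0 hline
  refine le_neg_of_hasDerivWithinAt_of_sub_le hg.hasDerivWithinAt fun t ht => ?_
  simpa using hqc.apply_add_smul_sub_le_of_le hx hy hxy (Ioo_subset_Icc_self ht)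

end StronglyQuasiconvexOn

theorem stmt_14_general {n : ℕ} (f : EuclideanSpace ℝ (Fin n) → ℝ) (hf : ContDiff ℝ 1 f)
    (s : ℝ) (D : Set (EuclideanSpace ℝ (Fin n)))
    (hqc : StronglyQuasiconvexOn s D f) :
    ∀ x ∈ D, ∀ y ∈ D, f x ≤ f y →
      (inner ℝ (gradient f y) (x - y) : ℝ) ≤ -(s * ‖x - y‖ ^ 2) := by
  intro x hx y hy hxy
  rw [inner_gradient_left]
  exact hqc.fderiv_apply_sub_le hx hy hxy (hf.differentiable one_ne_zero y)

/-- first-order property of strongly quasiconvex functions.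
If `f : ℝⁿ → ℝ` is `C¹` and strongly quasiconvex with parameter `s > 0` on a convex set `D`,
then for all `x, y ∈ D` with `f x ≤ f y` one has `⟪∇f(y), x - y⟫ ≤ -s ‖x - y‖²`. -/
theorem stmt_14 {n : ℕ} (f : EuclideanSpace ℝ (Fin n) → ℝ) (hf : ContDiff ℝ 1 f)
    (s : ℝ) (hs : 0 < s) (D : Set (EuclideanSpace ℝ (Fin n)))
    (hqc : StronglyQuasiconvexOn s D f) :
    ∀ x ∈ D, ∀ y ∈ D, f x ≤ f y →
      (inner ℝ (gradient f y) (x - y) : ℝ) ≤ -(s * ‖x - y‖ ^ 2) :=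
  stmt_14_general f hf s D hqc
end
end

section
/- Let c₁ ∈ ℝ, c₂ > 0, δ > 0, and define f : ℝ → ℝ by f(x) = c₁ − c₂e^{−x²}. Then f is strongly quasiconvex with parameter s on the interval (−δ, δ) for any 0 < s ≤ c₂e^{−δ²}; that is, for all x, y ∈ (−δ, δ) and all λ ∈ [0,1], max{f(x), f(y)} − f(λx + (1−λ)y) ≥ s λ(1−λ)(x − y)². -/
open Set

/-- For `c₁ ∈ ℝ`, `c₂ > 0`, `δ > 0`, the function
`f x = c₁ - c₂ * exp (-x²)` is strongly quasiconvex with parameter `s` on `(-δ, δ)`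
for any `0 < s ≤ c₂ * exp (-δ²)`. -/
theorem stmt_18 (c₁ c₂ δ s : ℝ) (hc₂ : 0 < c₂) (hδ : 0 < δ) (hs : 0 < s)
    (hsle : s ≤ c₂ * Real.exp (-δ ^ 2)) :
    ∀ x ∈ Ioo (-δ) δ, ∀ y ∈ Ioo (-δ) δ, ∀ lam ∈ Icc (0 : ℝ) 1,
      s * lam * (1 - lam) * (x - y) ^ 2 ≤
        max (c₁ - c₂ * Real.exp (-x ^ 2)) (c₁ - c₂ * Real.exp (-y ^ 2)) -
          (c₁ - c₂ * Real.exp (-(lam * x + (1 - lam) * y) ^ 2)) := by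
  intro x hx y hy lam hlam
  obtain ⟨hl0, hl1⟩ := hlam
  set t : ℝ := lam * (1 - lam) * (x - y) ^ 2 with hteq
  have ht : 0 ≤ t := mul_nonneg (mul_nonneg hl0 (by linarith)) (sq_nonneg _)
  set z : ℝ := lam * x + (1 - lam) * y with hzdef
  have hxδ : x ^ 2 < δ ^ 2 := by nlinarith [hx.1, hx.2]
  have hyδ : y ^ 2 < δ ^ 2 := by nlinarith [hy.1, hy.2]
  set M : ℝ := max (x ^ 2) (y ^ 2) with hMdef
  have hMδ : M ≤ δ ^ 2 := max_le hxδ.le hyδ.le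
  have hzsq : z ^ 2 + t = lam * x ^ 2 + (1 - lam) * y ^ 2 := by
    rw [hzdef, hteq]; ring
  have hzM : z ^ 2 ≤ M - t := by
    have h1 : x ^ 2 ≤ M := le_max_left _ _
    have h2 : y ^ 2 ≤ M := le_max_right _ _
    nlinarith [mul_le_mul_of_nonneg_left h1 hl0, mul_le_mul_of_nonneg_left h2 (by linarith : (0:ℝ) ≤ 1 - lam)]
  have key : s * t ≤ c₂ * Real.exp (-z ^ 2) - c₂ * Real.exp (-M) := by
    have h1 : Real.exp (-M) * (t + 1) ≤ Real.exp (-M) * Real.exp t := by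
      have := Real.add_one_le_exp t
      nlinarith [Real.exp_pos (-M)]
    have h2 : Real.exp (-M) * Real.exp t = Real.exp (t - M) := by
      rw [← Real.exp_add]; ring_nf
    have h3 : Real.exp (t - M) ≤ Real.exp (-z ^ 2) := Real.exp_le_exp.2 (by linarith)
    have h4 : s * t ≤ c₂ * Real.exp (-M) * t := by
      have h5 : Real.exp (-δ ^ 2) ≤ Real.exp (-M) := Real.exp_le_exp.2 (by linarith)
      nlinarith [mul_le_mul_of_nonneg_right h5 ht, mul_le_mul_of_nonneg_right hsle ht, mul_nonneg hc₂.le ht]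
    nlinarith [Real.exp_pos (-M)]
  have hmax : c₁ - c₂ * Real.exp (-M) ≤
      max (c₁ - c₂ * Real.exp (-x ^ 2)) (c₁ - c₂ * Real.exp (-y ^ 2)) := by
    rcases le_total (x ^ 2) (y ^ 2) with h | h
    · rw [hMdef, max_eq_right h]; exact le_max_right _ _
    · rw [hMdef, max_eq_left h]; exact le_max_left _ _
  have hfinal : s * lam * (1 - lam) * (x - y) ^ 2 = s * t := by rw [hteq]; ring
  rw [hfinal, hzdef]
  linarith
end
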